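/- arXiv:1506.02924 — 13 statements merged into one kernel-verified Lean document; each statement's English description precedes it below -/
import Mathlib

section
/- Let R be a ring with Jacobson radical J, and let M be a left R-module such that every submodule N of M is an RD-pure submodule (i.e., for every r ∈ R, rM ∩ N = rN). Then J • M = 0. -/
universe u v

/-- `N` is a pure submodule of `M`: every finite system of linear equations with
constant terms in `N` which is solvable in `M` is solvable in `N`
(equivalently, `- ⊗ N → - ⊗ M` stays injective). -/
def IsPureSubmodule (R : Type u) [Ring R] {M : Type v} [AddCommGroup M] [Module R M]
    (N : Submodule R M) : Prop :=
  ∀ (k l : ℕ) (a : Fin k → Fin l → R) (e : Fin k → N),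
    (∃ x : Fin l → M, ∀ i, ∑ j, a i j • x j = (e i : M)) →
    ∃ y : Fin l → N, ∀ i, ∑ j, a i j • (y j : M) = (e i : M)

/-- `N` is an RD-pure (relatively divisible) submodule of `M`: `rM ∩ N = rN` for all `r`. -/
def IsRDPureSubmodule (R : Type u) [Ring R] {M : Type v} [AddCommGroup M] [Module R M]
    (N : Submodule R M) : Prop :=
  ∀ (r : R) (n : M), n ∈ N → (∃ m : M, r • m = n) → ∃ n' ∈ N, r • n' = n

/-- `N` is an essential submodule of `M`. -/
def IsEssentialSubmodule (R : Type u) [Ring R] {M : Type v} [AddCommGroup M] [Module R M]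
    (N : Submodule R M) : Prop :=
  ∀ K : Submodule R M, K ⊓ N = ⊥ → K = ⊥

/-- `M` is a pure-essential extension of its submodule `N`. -/
def IsPureEssential (R : Type u) [Ring R] {M : Type v} [AddCommGroup M] [Module R M]
    (N : Submodule R M) : Prop :=
  IsPureSubmodule R N ∧ ∀ K : Submodule R M, K ≠ ⊥ → K ⊓ N = ⊥ →
    ¬ IsPureSubmodule R (N.map K.mkQ)

/-- `M` is an RD-essential extension of its submodule `N`. -/
def IsRDEssential (R : Type u) [Ring R] {M : Type v} [AddCommGroup M] [Module R M]
    (N : Submodule R M) : Prop :=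
  IsRDPureSubmodule R N ∧ ∀ K : Submodule R M, K ≠ ⊥ → K ⊓ N = ⊥ →
    ¬ IsRDPureSubmodule R (N.map K.mkQ)

/-- `M` is pure-injective: injective relative to pure monomorphisms. -/
def IsPureInjective (R : Type u) [Ring R] (M : Type v) [AddCommGroup M] [Module R M] : Prop :=
  ∀ (A B : Type v) [AddCommGroup A] [Module R A] [AddCommGroup B] [Module R B]
    (f : A →ₗ[R] B), Function.Injective f → IsPureSubmodule R (LinearMap.range f) →
    ∀ g : A →ₗ[R] M, ∃ h : B →ₗ[R] M, h ∘ₗ f = g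

/-- `M` is RD-injective: injective relative to RD-pure monomorphisms. -/
def IsRDInjective (R : Type u) [Ring R] (M : Type v) [AddCommGroup M] [Module R M] : Prop :=
  ∀ (A B : Type v) [AddCommGroup A] [Module R A] [AddCommGroup B] [Module R B]
    (f : A →ₗ[R] B), Function.Injective f → IsRDPureSubmodule R (LinearMap.range f) →
    ∀ g : A →ₗ[R] M, ∃ h : B →ₗ[R] M, h ∘ₗ f = g

/-- `Ext¹_R(F, M) = 0`, phrased as: every short exact sequence `0 → M → X → F → 0` splits. -/
def Ext1Vanishes (R : Type u) [Ring R] (F : Type v) [AddCommGroup F] [Module R F]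
    (M : Type v) [AddCommGroup M] [Module R M] : Prop :=
  ∀ (X : Type v) [AddCommGroup X] [Module R X] (i : M →ₗ[R] X) (p : X →ₗ[R] F),
    Function.Injective i → Function.Surjective p → LinearMap.ker p = LinearMap.range i →
    ∃ s : X →ₗ[R] M, s ∘ₗ i = LinearMap.id

/-- `M` is FP-injective: `Ext¹(F, M) = 0` for every finitely presented `F`. -/
def IsFPInjective (R : Type u) [Ring R] (M : Type v) [AddCommGroup M] [Module R M] : Prop :=
  ∀ (F : Type v) [AddCommGroup F] [Module R F], Module.FinitePresentation R F →
    Ext1Vanishes R F M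

/-- `M` is P-flat: `Tor₁(R/rR, M) = 0` for every `r`, i.e. `rm = 0` implies
`m ∈ (right annihilator of r) • M`. -/
def IsPFlat (R : Type u) [Ring R] (M : Type v) [AddCommGroup M] [Module R M] : Prop :=
  ∀ (r : R) (m : M), r • m = 0 →
    m ∈ Submodule.span R {x : M | ∃ s : R, ∃ y : M, r * s = 0 ∧ x = s • y}

/-- `M` is a flat left module (equational criterion of flatness, valid over any ring). -/
def IsFlatMod (R : Type u) [Ring R] (M : Type v) [AddCommGroup M] [Module R M] : Prop :=
  ∀ (k : ℕ) (a : Fin k → R) (x : Fin k → M), (∑ i, a i • x i) = 0 →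
    ∃ (l : ℕ) (b : Fin k → Fin l → R) (y : Fin l → M),
      (∀ i, x i = ∑ j, b i j • y j) ∧ ∀ j, (∑ i, a i * b i j) = 0

/-- `M` is semi-compact: every finitely solvable system of congruences
`x ≡ x_α (mod M[I_α])` has a simultaneous solution. -/
def IsSemiCompact (R : Type u) [Ring R] (M : Type v) [AddCommGroup M] [Module R M] : Prop :=
  ∀ (ι : Type v) (x : ι → M) (I : ι → Ideal R),
    (∀ s : Finset ι, ∃ m : M, ∀ i ∈ s, ∀ a ∈ I i, a • (m - x i) = 0) →
    ∃ m : M, ∀ i, ∀ a ∈ I i, a • (m - x i) = 0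
/-- `1 + x` with `x` in the Jacobson radical has a left inverse, so it acts injectively. -/
theorem eq_zero_of_one_add_smul_eq_zero {R : Type u} [Ring R] {M : Type v} [AddCommGroup M]
    [Module R M] {x : R} (hx : x ∈ Ideal.jacobson (⊥ : Ideal R)) {m : M}
    (h : (1 + x) • m = 0) : m = 0 := by
  obtain ⟨z, hz⟩ := Ideal.exists_mul_add_sub_mem_of_mem_jacobson x hx
  have hz : z * (1 + x) = 1 := by
    rwa [Ideal.mem_bot, sub_eq_zero, add_comm] at hz
  rw [← one_smul R m, ← hz, mul_smul, h, smul_zero]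

theorem IsRDPureSubmodule.exists_mul_smul_eq {R : Type u} [Ring R] {M : Type v}
    [AddCommGroup M] [Module R M] {a : R} {m : M}
    (h : IsRDPureSubmodule R (R ∙ (a • m))) : ∃ s : R, (a * s) • (a • m) = a • m := by
  obtain ⟨n, hn, han⟩ := h a (a • m) (Submodule.mem_span_singleton_self _) ⟨m, rfl⟩
  obtain ⟨s, rfl⟩ := Submodule.mem_span_singleton.mp hn
  exact ⟨s, by rwa [mul_smul]⟩

/-- If every submodule of `M` is RD-pure, then `J(R) • M = 0`. -/
theorem jacobson_smul_eq_zero_of_rd_regular (R : Type u) [Ring R]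
    (M : Type v) [AddCommGroup M] [Module R M]
    (hreg : ∀ N : Submodule R M, IsRDPureSubmodule R N) :
    ∀ a ∈ Ideal.jacobson (⊥ : Ideal R), ∀ m : M, a • m = 0 := by
  intro a ha m
  obtain ⟨s, hs⟩ := (hreg (R ∙ (a • m))).exists_mul_smul_eq
  -- `Ideal R` means left ideal; `mul_mem_right` uses that the Jacobson radical is two-sided.
  have has : -(a * s) ∈ Ideal.jacobson (⊥ : Ideal R) :=
    neg_mem (Ideal.mul_mem_right s _ ha)
  refine eq_zero_of_one_add_smul_eq_zero has ?_
  rw [← sub_eq_add_neg, sub_smul, one_smul, hs, sub_self]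
end

section
/- Let R be a semilocal ring (R modulo its Jacobson radical is semisimple) and let M be a left R-module all of whose submodules are RD-pure. Then M is a semisimple module. -/
/-!
If `r ∈ J(R)` and `R(rm)` is RD-pure, then `rm = r(t·rm)` for some `t`, so `(1 - rt)·rm = 0`;
since `1 - rt` is a unit, `rm = 0`. Thus `J(R)` annihilates `M`, and every cyclic submodule of `M`
is a quotient of the semisimple module `R/J(R)`, so `M`, the sum of its cyclic submodules, is
semisimple.
-/

universe u v

variable {R : Type u} [Ring R] {M : Type v} [AddCommGroup M] [Module R M]

theorem smul_eq_zero_of_mem_jacobson_of_isRDPure {r : R} (hr : r ∈ Ideal.jacobson (⊥ : Ideal R))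
    (m : M) (hpure : IsRDPureSubmodule R (R ∙ (r • m))) : r • m = 0 := by
  obtain ⟨n', hn', hrn'⟩ := hpure r (r • m) (Submodule.mem_span_singleton_self _) ⟨m, rfl⟩
  obtain ⟨t, rfl⟩ := Submodule.mem_span_singleton.mp hn'
  -- `J(R)` is two-sided, so `rt ∈ J(R)` and `1 - rt` has a left inverse `z`.
  obtain ⟨z, hzJ⟩ := Ideal.mem_jacobson_iff.mp (Ideal.mul_mem_right t _ hr) (-1)
  have hz : z * (1 - r * t) = 1 := by
    rw [Submodule.mem_bot, sub_eq_zero] at hzJ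
    calc z * (1 - r * t) = z * -1 * (r * t) + z := by noncomm_ring
      _ = 1 := hzJ
  calc r • m = (z * (1 - r * t)) • (r • m) := by rw [hz, one_smul]
    _ = 0 := by rw [mul_smul, sub_smul, one_smul, mul_smul, hrn', sub_self, smul_zero]

theorem jacobson_le_annihilator_of_forall_isRDPure
    (hreg : ∀ N : Submodule R M, IsRDPureSubmodule R N) :
    Ideal.jacobson (⊥ : Ideal R) ≤ Module.annihilator R M := fun _ hr =>
  Module.mem_annihilator.mpr fun m => smul_eq_zero_of_mem_jacobson_of_isRDPure hr m (hreg _)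

theorem isSemisimpleModule_of_le_annihilator {I : Ideal R} [IsSemisimpleModule R (R ⧸ I)]
    (hI : I ≤ Module.annihilator R M) : IsSemisimpleModule R M := by
  have hcyclic (m : M) : IsSemisimpleModule R (R ∙ m) := by
    have hker : I ≤ LinearMap.ker (LinearMap.toSpanSingleton R M m) := fun r hr =>
      Module.mem_annihilator.mp (hI hr) m
    rw [LinearMap.span_singleton_eq_range, ← Submodule.range_liftQ I _ hker]
    exact .range _
  refine isSemisimpleModule_of_isSemisimpleModule_submodule' hcyclic ?_
  rw [Submodule.iSup_span, Set.iUnion_singleton_eq_range, Set.range_id', Submodule.span_univ]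

/-- Over a semilocal ring, a module all of whose submodules are RD-pure
is semisimple. -/
theorem isSemisimpleModule_of_rd_regular_of_semilocal (R : Type u) [Ring R]
    (hsemilocal : IsSemisimpleModule R (R ⧸ Ideal.jacobson (⊥ : Ideal R)))
    (M : Type u) [AddCommGroup M] [Module R M]
    (hreg : ∀ N : Submodule R M, IsRDPureSubmodule R N) :
    IsSemisimpleModule R M :=
  isSemisimpleModule_of_le_annihilator (jacobson_le_annihilator_of_forall_isRDPure hreg)
end

section
/- Let R be a commutative ring in which every prime ideal is maximal. Then for each maximal ideal P, the localization R_P is isomorphic as an R-algebra to R/0_P, where 0_P is the kernel of the localization map R → R_P. -/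
universe u v

open scoped nonZeroDivisors

/-! In a ring of Krull dimension zero every prime is minimal, so a non-zero-divisor lies in no
prime and is a unit. Modulo the kernel `0_S` of `R → S⁻¹R` the elements of `S` become
non-zero-divisors (the quotient embeds into `S⁻¹R`, where they are units), hence units of `R ⧸ 0_S`,
which is again zero-dimensional. So `R ⧸ 0_S → S⁻¹R` is onto, and it is injective by construction.
-/

namespace Ring.KrullDimLE

variable {R : Type*} [CommRing R] [Ring.KrullDimLE 0 R]

theorem isUnit_of_mem_nonZeroDivisors {x : R} (hx : x ∈ R⁰) : IsUnit x := by
  by_contra hunit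
  obtain ⟨M, hM, hxM⟩ := exists_max_ideal_of_mem_nonunits hunit
  have hmin : M ∈ minimalPrimes R := Ideal.mem_minimalPrimes_of_krullDimLE_zero M
  exact Set.disjoint_left.mp (Ideal.disjoint_nonZeroDivisors_of_mem_minimalPrimes hmin) hxM hx

instance quotient (I : Ideal R) : Ring.KrullDimLE 0 (R ⧸ I) :=
  Ideal.krullDimLE_zero_quotient_iff_forall_minimalPrimes_isMaximal.mpr
    fun _ hJ ↦ hJ.1.1.isMaximal'

theorem localization_surjective (S : Submonoid R) (L : Type*) [CommRing L] [Algebra R L]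
    [IsLocalization S L] : Function.Surjective (algebraMap R L) := by
  set f := algebraMap R L
  have hunit (s : S) : IsUnit (Ideal.Quotient.mk (RingHom.ker f) s) := by
    refine isUnit_of_mem_nonZeroDivisors
      (mem_nonZeroDivisors_of_injective (RingHom.kerLift_injective f) ?_)
    exact (IsLocalization.map_units L s).mem_nonZeroDivisors
  intro z
  obtain ⟨a, s, rfl⟩ := IsLocalization.exists_mk'_eq S z
  obtain ⟨r, hr⟩ := Ideal.Quotient.mk_surjective (hunit s).unit⁻¹.val
  have hsr : f s * f r = 1 := by
    have hmk : Ideal.Quotient.mk (RingHom.ker f) (s * r) = 1 := by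
      rw [map_mul, hr, IsUnit.mul_val_inv]
    simpa using congrArg (RingHom.kerLift f) hmk
  refine ⟨a * r, ?_⟩
  rw [eq_comm, IsLocalization.mk'_eq_iff_eq_mul, map_mul]
  linear_combination (-f a) * hsr

end Ring.KrullDimLE

/-- If every prime of `R` is maximal then `R_P ≅ R/0_P` as `R`-algebras,
where `0_P` is the kernel of `R → R_P`. -/
theorem localization_iso_quotient_ker_of_dim_zero (R : Type u) [CommRing R]
    (hdim : ∀ Q : Ideal R, Q.IsPrime → Q.IsMaximal)
    (P : Ideal R) [P.IsMaximal] :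
    Nonempty ((R ⧸ RingHom.ker (algebraMap R (Localization.AtPrime P))) ≃ₐ[R]
      Localization.AtPrime P) := by
  have : Ring.KrullDimLE 0 R := .mk₀ hdim
  exact ⟨Ideal.quotientKerAlgEquivOfSurjective (f := Algebra.ofId R _)
    (Ring.KrullDimLE.localization_surjective P.primeCompl _)⟩
end

section
/- Let R be a commutative ring in which every prime ideal is maximal, and let C be a closed subset of Spec R. Then C = V(A) where A = ⋂_{P ∈ C} 0_P, and moreover A is a pure ideal of R (i.e., R/A is a flat R-module). -/
/-!
In a zero-dimensional ring every `f` has a `t` coprime to it with `t * f ^ n = 0`: the image of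
`f` in `R_m` is nilpotent for each maximal `m ∋ f`. Since `t` becomes a unit in `R_P` for every
prime `P ∋ f`, the power `f ^ n` lies in `0_P` for all `P ∈ V(f)`, which forces `V(A) ⊆ V(f)`.
For purity, an `a ∈ A` dies in `R_m` for every maximal `m ⊇ A`, so `Ann(a) + A = R`; writing
`1 = t + b` gives `a = a * b` with `b ∈ A`, and this characterises pure ideals.
-/

universe u v

open PrimeSpectrum

section

variable {R : Type*} [CommRing R]

lemma Localization.AtPrime.ker_algebraMap_le (p : Ideal R) [p.IsPrime] :
    RingHom.ker (algebraMap R (Localization.AtPrime p)) ≤ p := fun x hx ↦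
  (IsLocalization.AtPrime.to_map_mem_maximal_iff _ p x).mp <| by
    rw [RingHom.mem_ker.mp hx]
    exact zero_mem _

lemma Ideal.Pure.of_forall_exists_eq_mul {I : Ideal R} (h : ∀ x ∈ I, ∃ y ∈ I, x = x * y) :
    I.Pure := by
  refine Ideal.Pure.of_inf_eq_mul I fun J _ ↦ le_antisymm (fun x ⟨hxI, hxJ⟩ ↦ ?_) Ideal.mul_le_inf
  obtain ⟨y, hy, hxy⟩ := h x hxI
  rw [hxy]
  exact Ideal.mul_mem_mul_rev hy hxJ

lemma Ideal.exists_eq_mul_of_forall_le_ker_atMaximal {I : Ideal R}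
    (h : ∀ (m : Ideal R) [m.IsMaximal], I ≤ m →
      I ≤ RingHom.ker (algebraMap R (Localization.AtPrime m)))
    {x : R} (hx : x ∈ I) : ∃ y ∈ I, x = x * y := by
  suffices hcop : (⊥ : Ideal R).colon (Ideal.span {x}) ⊔ I = ⊤ by
    obtain ⟨t, ht, y, hy, hty⟩ := Submodule.mem_sup.mp (hcop ▸ Submodule.mem_top : (1 : R) ∈ _)
    have htx : t * x = 0 := Ideal.mem_colon_span_singleton.mp ht
    exact ⟨y, hy, by linear_combination htx - x * hty⟩
  by_contra hne
  obtain ⟨m, hm, hle⟩ := Ideal.exists_le_maximal _ hne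
  obtain ⟨⟨t, htm⟩, htx⟩ :=
    (IsLocalization.map_eq_zero_iff m.primeCompl (Localization.AtPrime m) x).mp
      (h m (le_sup_right.trans hle) hx)
  exact htm (hle (Ideal.mem_sup_left (Ideal.mem_colon_span_singleton.mpr (by simpa using htx))))

lemma Ring.KrullDimLE.exists_isCoprime_mul_pow_eq_zero [Ring.KrullDimLE 0 R] (f : R) :
    ∃ t : R, ∃ n : ℕ, IsCoprime f t ∧ t * f ^ n = 0 := by
  suffices hcop : Ideal.span {f} ⊔ (nilradical R).colon (Ideal.span {f}) = ⊤ by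
    obtain ⟨_, hg, z, hz, hgz⟩ := Submodule.mem_sup.mp (hcop ▸ Submodule.mem_top : (1 : R) ∈ _)
    obtain ⟨g, rfl⟩ := Ideal.mem_span_singleton'.mp hg
    obtain ⟨n, hn⟩ := Ideal.mem_colon_span_singleton.mp hz
    exact ⟨z ^ n, n, IsCoprime.pow_right ⟨g, 1, by linear_combination hgz⟩, by rwa [← mul_pow]⟩
  by_contra hne
  obtain ⟨m, hm, hle⟩ := Ideal.exists_le_maximal _ hne
  have := Ring.KrullDimLE.of_isLocalization m (Ideal.mem_minimalPrimes_of_krullDimLE_zero m)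
    (Localization.AtPrime m)
  have hfm : f ∈ m := hle (Ideal.mem_sup_left (Ideal.mem_span_singleton_self f))
  obtain ⟨k, hk⟩ := Ring.KrullDimLE.isNilpotent_iff_mem_maximalIdeal.mpr
    ((IsLocalization.AtPrime.to_map_mem_maximal_iff (Localization.AtPrime m) m f).mpr hfm)
  rw [← map_pow, IsLocalization.map_eq_zero_iff m.primeCompl] at hk
  obtain ⟨⟨s, hs⟩, hsf⟩ := hk
  exact hs (hle (Ideal.mem_sup_right (Ideal.mem_colon_span_singleton.mpr
    (mem_nilradical.mpr ⟨k + 1, by linear_combination (s ^ k * f) * hsf⟩))))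

lemma PrimeSpectrum.zeroLocus_iInf_ker_algebraMap_atPrime [Ring.KrullDimLE 0 R] (s : Set R) :
    zeroLocus (↑(⨅ P ∈ zeroLocus s, RingHom.ker (algebraMap R (Localization.AtPrime P.asIdeal)))) =
      zeroLocus s := by
  refine subset_antisymm (fun Q hQ f hf ↦ ?_) fun P hP ↦ SetLike.coe_subset_coe.mpr
    ((iInf₂_le P hP).trans (Localization.AtPrime.ker_algebraMap_le P.asIdeal))
  obtain ⟨t, n, hft, htf⟩ := Ring.KrullDimLE.exists_isCoprime_mul_pow_eq_zero f
  have hfn : f ^ n ∈ ⨅ P ∈ zeroLocus s,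
      RingHom.ker (algebraMap R (Localization.AtPrime P.asIdeal)) := by
    simp only [Submodule.mem_iInf]
    intro P hP
    rw [RingHom.mem_ker, IsLocalization.map_eq_zero_iff P.asIdeal.primeCompl]
    exact ⟨⟨t, Ideal.IsPrime.notMem_of_isCoprime_of_mem hft (hP hf)⟩, htf⟩
  exact Q.isPrime.mem_of_pow_mem n (hQ hfn)

end

/-- If every prime of `R` is maximal and `C ⊆ Spec R` is closed, then
`C = V(A)` where `A = ⋂_{P ∈ C} 0_P`, and `A` is a pure ideal (`R/A` is flat). -/
theorem closed_eq_zeroLocus_inf_ker_and_pure (R : Type u) [CommRing R]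
    (hdim : ∀ Q : Ideal R, Q.IsPrime → Q.IsMaximal)
    (C : Set (PrimeSpectrum R)) (hC : IsClosed C)
    (A : Ideal R)
    (hA : A = ⨅ P ∈ C, RingHom.ker (algebraMap R (Localization.AtPrime P.asIdeal))) :
    C = PrimeSpectrum.zeroLocus (A : Set R) ∧ Module.Flat R (R ⧸ A) := by
  have := Ring.KrullDimLE.mk₀ hdim
  obtain ⟨s, rfl⟩ := (isClosed_iff_zeroLocus C).mp hC
  have hVA : zeroLocus s = zeroLocus (A : Set R) := by
    rw [hA, PrimeSpectrum.zeroLocus_iInf_ker_algebraMap_atPrime]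
  refine ⟨hVA, Ideal.Pure.of_forall_exists_eq_mul fun x hx ↦
    Ideal.exists_eq_mul_of_forall_le_ker_atMaximal (fun m _ hAm ↦ ?_) hx⟩
  have hmC : (⟨m, inferInstance⟩ : PrimeSpectrum R) ∈ zeroLocus s := hVA ▸ hAm
  rw [hA]
  exact iInf₂_le _ hmC
end

section
/- Let R be a commutative ring in which every prime ideal is maximal. Then every pure ideal A of R is generated by idempotent elements. -/
universe u v

/-!
For `a ∈ A`, purity gives `b ∈ A` with `a = a * b`, hence `a = a * b ^ k` for all `k`. In a
zero-dimensional ring every `b` satisfies `b ^ n = b ^ (n + 1) * r` for some `n` and `r`, and then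
`e = (b * r) ^ (n + 1)` is an idempotent of `A` with `b ^ n * e = b ^ n`, so `a = a * e`.
-/

theorem mul_pow_eq_self_of_mul_eq_self {M : Type*} [Monoid M] {a b : M} (h : a * b = a) :
    ∀ k : ℕ, a * b ^ k = a
  | 0 => by rw [pow_zero, mul_one]
  | k + 1 => by rw [pow_succ, ← mul_assoc, mul_pow_eq_self_of_mul_eq_self h k, h]

section PowEqPowSuccMul

variable {R : Type*} [CommRing R] {x r : R} {n : ℕ}

theorem pow_mul_mul_pow_eq_pow (h : x ^ n = x ^ (n + 1) * r) (k : ℕ) :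
    x ^ n * (x * r) ^ k = x ^ n :=
  mul_pow_eq_self_of_mul_eq_self (by linear_combination -h) k

theorem isIdempotentElem_mul_pow_succ (h : x ^ n = x ^ (n + 1) * r) :
    IsIdempotentElem ((x * r) ^ (n + 1)) :=
  calc (x * r) ^ (n + 1) * (x * r) ^ (n + 1)
      = x * r ^ (n + 1) * (x ^ n * (x * r) ^ (n + 1)) := by ring
    _ = (x * r) ^ (n + 1) := by rw [pow_mul_mul_pow_eq_pow h]; ring

end PowEqPowSuccMul

/-- Zero-dimensional rings are strongly π-regular. -/
theorem Ring.KrullDimLE.exists_pow_eq_pow_succ_mul {R : Type*} [CommRing R]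
    [Ring.KrullDimLE 0 R] (x : R) : ∃ (n : ℕ) (r : R), x ^ n = x ^ (n + 1) * r := by
  by_contra! h
  -- `0 ∈ S` is the claim; a prime avoiding `S` omits `x`, yet being maximal it contains some
  -- `1 - x * v ∈ S`.
  let S : Submonoid R :=
    { carrier := {s | ∃ (n : ℕ) (r : R), s = x ^ n * (1 - x * r)}
      mul_mem' := by
        rintro _ _ ⟨n, r, rfl⟩ ⟨m, t, rfl⟩
        exact ⟨n + m, r + t - x * r * t, by ring⟩
      one_mem' := ⟨0, 0, by ring⟩ }
  have hS : Disjoint ((⊥ : Ideal R) : Set R) S := by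
    refine Set.disjoint_left.mpr ?_
    rintro _ hzero ⟨n, r, rfl⟩
    exact h n r (by linear_combination (Ideal.mem_bot.mp hzero : x ^ n * (1 - x * r) = 0))
  obtain ⟨p, hp, -, hpS⟩ := Ideal.exists_le_prime_disjoint ⊥ S hS
  have hxp : x ∉ p := fun hx => Set.disjoint_left.mp hpS hx ⟨1, 0, by ring⟩
  obtain ⟨v, i, hi, hvi⟩ := hp.isMaximal'.exists_inv hxp
  have hvp : 1 - x * v ∈ p := by
    rwa [show 1 - x * v = i by linear_combination -hvi]
  exact Set.disjoint_left.mp hpS hvp ⟨0, v, by ring⟩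

/-- If every prime of `R` is maximal then every pure ideal of `R`
is generated by idempotents. -/
theorem pure_ideal_generated_by_idempotents (R : Type u) [CommRing R]
    (hdim : ∀ Q : Ideal R, Q.IsPrime → Q.IsMaximal)
    (A : Ideal R) (hA : Module.Flat R (R ⧸ A)) :
    A = Ideal.span {e : R | e ∈ A ∧ IsIdempotentElem e} := by
  have : A.Pure := hA
  have : Ring.KrullDimLE 0 R := .mk₀ hdim
  refine le_antisymm (fun a ha => ?_) (Ideal.span_le.mpr fun e he => he.1)
  obtain ⟨b, hbA, hab⟩ := Ideal.exists_eq_mul_of_pure ha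
  obtain ⟨n, r, hbr⟩ := Ring.KrullDimLE.exists_pow_eq_pow_succ_mul b
  set e := (b * r) ^ (n + 1)
  have heA : e ∈ A := Ideal.pow_mem_of_mem A (Ideal.mul_mem_right r A hbA) _ n.succ_pos
  have hae : a * e = a := by
    rw [← mul_pow_eq_self_of_mul_eq_self hab.symm n, mul_assoc, pow_mul_mul_pow_eq_pow hbr]
  rw [← hae]
  exact Ideal.mul_mem_left _ a (Ideal.subset_span ⟨heA, isIdempotentElem_mul_pow_succ hbr⟩)
end

section
/- Let R be a commutative ring and S a multiplicative subset of R. If A → B is a pure-essential extension of S⁻¹R-modules, and C is an R-submodule of B with A ∩ C = 0 and A pure in B/C, then S⁻¹C-localization of C is zero implies C = 0; consequently, if every pure-essential extension of R-modules is essential, then every pure-essential extension of S⁻¹R-modules is essential. -/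
/-!
Restriction of scalars along `R → S⁻¹R` turns a pure-essential extension `N ⊆ M` of
`S⁻¹R`-modules into a pure-essential extension of `R`-modules. Purity clearly restricts. If an
`R`-submodule `K` with `K ∩ N = 0` kept `N` pure modulo `K`, then its `S⁻¹R`-span
`S⁻¹K = {x | s • x ∈ K for some s ∈ S}` would do the same over `S⁻¹R`: it still meets `N`
trivially because `S` acts invertibly, and a system over `S⁻¹R` solvable modulo `S⁻¹K`
becomes, after clearing denominators and multiplying by a common `t ∈ S`, a system over `R`
solvable modulo `K`. Essentiality over `R` then descends to `S⁻¹R`.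
-/

universe u v

section RestrictScalars

variable {R A M : Type*} [CommRing R] [Ring A] [Algebra R A] [AddCommGroup M] [Module A M]
  [Module R M] [IsScalarTower R A M] {N : Submodule A M}

theorem IsPureSubmodule.restrictScalars (hN : IsPureSubmodule A N) :
    IsPureSubmodule R (N.restrictScalars R) := by
  rintro k l a e ⟨x, hx⟩
  obtain ⟨y, hy⟩ := hN k l (fun i j => algebraMap R A (a i j)) (fun i => ⟨e i, (e i).2⟩)
    ⟨x, by simpa only [algebraMap_smul] using hx⟩
  exact ⟨fun j => ⟨y j, (y j).2⟩, by simpa only [algebraMap_smul] using hy⟩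

theorem IsEssentialSubmodule.of_restrictScalars
    (hN : IsEssentialSubmodule R (N.restrictScalars R)) : IsEssentialSubmodule A N :=
  fun K hK => (Submodule.restrictScalars_eq_bot_iff R A M).1 <|
    hN _ (by rw [← Submodule.restrictScalars_inf, hK, Submodule.restrictScalars_bot])

end RestrictScalars

theorem Submodule.sum_smul_mk_eq_mk_iff {R A M : Type*} [Ring A] [AddCommGroup M] [Module A M]
    [SMul R A] [SMul R M] [IsScalarTower R A M] (P : Submodule A M) {l : ℕ} (r : Fin l → R)
    (m : Fin l → M) (n : M) :
    ∑ j, r j • (Submodule.Quotient.mk (m j) : M ⧸ P) = Submodule.Quotient.mk n ↔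
      ∑ j, r j • m j - n ∈ P := by
  have hsum : ∑ j, r j • (Submodule.Quotient.mk (m j) : M ⧸ P) =
      Submodule.Quotient.mk (∑ j, r j • m j) := by
    simp only [← Submodule.Quotient.mk_smul]
    exact (map_sum P.mkQ _ _).symm
  rw [hsum, Submodule.Quotient.eq]

section Localization

variable {R L M : Type*} [CommRing R] [CommRing L] [Algebra R L] [AddCommGroup M] [Module L M]
  [Module R M] [IsScalarTower R L M]

theorem IsLocalization.isPureSubmodule_of_exists_smul_solution (S : Submonoid R)
    [IsLocalization S L] (P : Submodule L M)
    (h : ∀ (k l : ℕ) (r : Fin k → Fin l → R) (e : Fin k → P),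
      (∃ x : Fin l → M, ∀ i, ∑ j, r i j • x j = (e i : M)) →
      ∃ t : S, ∃ y : Fin l → P, ∀ i, ∑ j, r i j • (y j : M) = (t : R) • (e i : M)) :
    IsPureSubmodule L P := by
  rintro k l a e ⟨x, hx⟩
  obtain ⟨s, hs⟩ := IsLocalization.exist_integer_multiples_of_finite S
    (fun p : Fin k × Fin l => a p.1 p.2)
  choose r hr using fun i j => hs (i, j)
  have hr' : ∀ i j, algebraMap R L (r i j) = algebraMap R L s * a i j := fun i j => by
    rw [hr i j, Algebra.smul_def]
  obtain ⟨t, y, hy⟩ := h k l r (fun i => (s : R) • e i) ⟨x, fun i => by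
    simp only [← algebraMap_smul L (r _ _), hr', mul_smul, ← Finset.smul_sum, hx,
      Submodule.coe_smul_of_tower]
    exact algebraMap_smul L (s : R) _⟩
  set u := IsLocalization.mk' L (1 : R) (t * s)
  refine ⟨fun j => (u * algebraMap R L s) • y j, fun i => ?_⟩
  calc ∑ j, a i j • (((u * algebraMap R L s) • y j : P) : M)
      = u • ∑ j, r i j • (y j : M) := by
        simp only [Submodule.coe_smul, Finset.smul_sum, ← algebraMap_smul L (r _ _), hr',
          smul_smul]
        exact Finset.sum_congr rfl fun j _ => by rw [mul_comm, mul_assoc]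
    _ = (u * algebraMap R L ((t * s : S) : R)) • (e i : M) := by
        rw [hy i, Submodule.coe_smul_of_tower, smul_smul, ← Submonoid.coe_mul,
          ← algebraMap_smul L ((t * s : S) : R) (e i : M), smul_smul]
    _ = (e i : M) := by rw [IsLocalization.mk'_spec, map_one, one_smul]

theorem IsLocalization.mem_span_iff_exists_smul_mem (S : Submonoid R) [IsLocalization S L]
    {K : Submodule R M} {x : M} :
    x ∈ Submodule.span L (K : Set M) ↔ ∃ s : S, (s : R) • x ∈ K := by
  have := isLocalizedModule_id S M L
  have hK : Submodule.span L (K : Set M) = K.localized' L S LinearMap.id := by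
    simp [Submodule.localized'_eq_span]
  rw [hK, Submodule.mem_localized']
  constructor
  · rintro ⟨m, hm, s, rfl⟩
    exact ⟨s, by rwa [← Submonoid.smul_def, IsLocalizedModule.mk'_cancel']⟩
  · rintro ⟨s, hs⟩
    exact ⟨_, hs, s, IsLocalizedModule.mk'_eq_iff.2 rfl⟩

theorem IsLocalization.exists_smul_mem_of_forall_mem_span (S : Submonoid R) [IsLocalization S L]
    {ι : Type*} [Fintype ι] {K : Submodule R M} {v : ι → M} (hv : ∀ i, v i ∈ Submodule.span L (K : Set M)) :
    ∃ t : S, ∀ i, (t : R) • v i ∈ K := by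
  classical
  choose t ht using fun i => (mem_span_iff_exists_smul_mem S).1 (hv i)
  refine ⟨∏ i, t i, fun i => ?_⟩
  rw [← Finset.prod_erase_mul _ _ (Finset.mem_univ i), Submonoid.coe_mul, mul_smul]
  exact K.smul_mem _ (ht i)

theorem IsLocalization.span_inf_eq_bot (S : Submonoid R) [IsLocalization S L]
    {K : Submodule R M} {N : Submodule L M} (h : K ⊓ N.restrictScalars R = ⊥) : Submodule.span L (K : Set M) ⊓ N = ⊥ := by
  refine (Submodule.eq_bot_iff _).2 fun x ⟨hxK, hxN⟩ => ?_
  obtain ⟨s, hs⟩ := (mem_span_iff_exists_smul_mem S).1 hxK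
  have hsx : (s : R) • x ∈ K ⊓ N.restrictScalars R := ⟨hs, N.smul_of_tower_mem _ hxN⟩
  rwa [h, Submodule.mem_bot, ← algebraMap_smul L, (IsLocalization.map_units L s).smul_eq_zero]
    at hsx

theorem IsLocalization.isPureSubmodule_map_mkQ_span (S : Submonoid R) [IsLocalization S L]
    {K : Submodule R M} {N : Submodule L M}
    (hK : IsPureSubmodule R ((N.restrictScalars R).map K.mkQ)) :
    IsPureSubmodule L (N.map (Submodule.span L (K : Set M)).mkQ) := by
  refine isPureSubmodule_of_exists_smul_solution (L := L) S _ fun k l r e ⟨x, hx⟩ => ?_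
  choose n hnN hn using fun i => (e i).2
  choose m hm using fun j => Submodule.Quotient.mk_surjective _ (x j)
  obtain ⟨t, ht⟩ := exists_smul_mem_of_forall_mem_span (L := L) S
    (v := fun i => ∑ j, r i j • m j - n i) fun i => by
      refine (Submodule.sum_smul_mk_eq_mk_iff _ (r i) m (n i)).1 ?_
      rw [← Submodule.mkQ_apply, hn i, ← hx i]
      simp only [hm]
  obtain ⟨w, hw⟩ := hK k l r
    (fun i => ⟨Submodule.Quotient.mk ((t : R) • n i), _, N.smul_of_tower_mem _ (hnN i), rfl⟩)
    ⟨fun j => Submodule.Quotient.mk ((t : R) • m j), fun i => by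
      rw [Submodule.sum_smul_mk_eq_mk_iff]
      simpa only [smul_sub, Finset.smul_sum, smul_comm (t : R)] using ht i⟩
  choose w' hw'N hw' using fun j => (w j).2
  refine ⟨t, fun j => ⟨Submodule.Quotient.mk (w' j), w' j, hw'N j, rfl⟩, fun i => ?_⟩
  have hK : ∑ j, r i j • w' j - (t : R) • n i ∈ K := by
    rw [← Submodule.sum_smul_mk_eq_mk_iff]
    simpa only [← hw', Submodule.mkQ_apply] using hw i
  rw [← hn i]
  exact (Submodule.sum_smul_mk_eq_mk_iff _ _ _ _).2 (Submodule.subset_span hK)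

theorem IsPureEssential.restrictScalars (S : Submonoid R) [IsLocalization S L]
    {N : Submodule L M} (hN : IsPureEssential L N) :
    IsPureEssential R (N.restrictScalars R) := by
  refine ⟨hN.1.restrictScalars, fun K hK hKN hpure => hN.2 (Submodule.span L (K : Set M)) ?_
    (IsLocalization.span_inf_eq_bot S (inf_comm K _ ▸ hKN))
    (IsLocalization.isPureSubmodule_map_mkQ_span S hpure)⟩
  exact fun h => hK ((Submodule.eq_bot_iff K).2 (Submodule.span_eq_bot.1 h))

end Localization

/-- For a multiplicative subset `S` of `R`: if `A ⊆ B` is a pure-essential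
extension of `S⁻¹R`-modules and `C` is an `R`-submodule of `B` with `A ∩ C = 0` and `A`
pure in `B/C` (over `R`), then `S⁻¹C = 0` implies `C = 0`; consequently, if every
pure-essential extension of `R`-modules is essential, then every pure-essential extension
of `S⁻¹R`-modules is essential. -/
theorem pure_essential_localization (R : Type u) [CommRing R] (S : Submonoid R) :
    (∀ (B : Type u) [AddCommGroup B] [Module (Localization S) B]
      [Module R B] [IsScalarTower R (Localization S) B]
      (A : Submodule (Localization S) B), IsPureEssential (Localization S) A →
      ∀ C : Submodule R B, (A.restrictScalars R) ⊓ C = ⊥ →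
        IsPureSubmodule R ((A.restrictScalars R).map C.mkQ) →
        Submodule.span (Localization S) (C : Set B) = ⊥ → C = ⊥) ∧
    ((∀ (M : Type u) [AddCommGroup M] [Module R M] (N : Submodule R M),
        IsPureEssential R N → IsEssentialSubmodule R N) →
      ∀ (M : Type u) [AddCommGroup M] [Module (Localization S) M]
        (N : Submodule (Localization S) M),
        IsPureEssential (Localization S) N → IsEssentialSubmodule (Localization S) N) := by
  refine ⟨fun B _ _ _ _ A _ C _ _ hC => (Submodule.eq_bot_iff C).2 (Submodule.span_eq_bot.1 hC),
    fun hR M _ _ N hN => ?_⟩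
  let _ : Module R M := Module.compHom M (algebraMap R (Localization S))
  have _ : IsScalarTower R (Localization S) M := .of_compHom R (Localization S) M
  exact .of_restrictScalars (hR M _ (hN.restrictScalars S))
end

section
/- If R is a commutative ring such that every semi-compact R-module is pure-injective, then every prime ideal of R is maximal. -/
universe u v

/-- If `R` is a commutative ring such that every semi-compact `R`-module is
pure-injective, then every prime ideal of `R` is maximal. -/
theorem prime_isMaximal_of_semiCompact_pureInjective (R : Type u) [CommRing R]
    (h : ∀ (M : Type u) [AddCommGroup M] [Module R M],
      IsSemiCompact R M → IsPureInjective R M) :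
    ∀ P : Ideal R, P.IsPrime → P.IsMaximal := by
  intro P hP
  haveI := hP
  -- scalar action on the quotient
  have smul_def : ∀ (a : R) (d : R ⧸ P), a • d = Ideal.Quotient.mk P a * d := by
    intro a d
    rw [Algebra.smul_def, Ideal.Quotient.algebraMap_eq]
  -- elements of P annihilate every finsupp
  have hzero : ∀ a ∈ P, ∀ m : ℕ →₀ R ⧸ P, a • m = 0 := by
    intro a ha m
    ext n
    rw [Finsupp.smul_apply, smul_def, Ideal.Quotient.eq_zero_iff_mem.mpr ha, zero_mul,
      Finsupp.coe_zero, Pi.zero_apply]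
  -- elements outside P act injectively
  have hinj : ∀ a : R, a ∉ P → ∀ m : ℕ →₀ R ⧸ P, a • m = 0 → m = 0 := by
    intro a ha m hm
    ext n
    have h1 : (a • m) n = 0 := by rw [hm]; simp
    rw [Finsupp.smul_apply, smul_def] at h1
    have h2 : Ideal.Quotient.mk P a ≠ 0 := by
      simpa [Ne, Ideal.Quotient.eq_zero_iff_mem] using ha
    simpa using (mul_eq_zero.mp h1).resolve_left h2
  -- the direct sum ⊕ℕ (R⧸P) is semi-compact
  have hsc : IsSemiCompact R (ℕ →₀ R ⧸ P) := by
    intro ι x I hfin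
    classical
    by_cases hex : ∃ i, ¬ I i ≤ P
    · obtain ⟨i₀, hi₀⟩ := hex
      obtain ⟨a₀, ha₀I, ha₀P⟩ := SetLike.not_le_iff_exists.mp hi₀
      refine ⟨x i₀, fun i a ha => ?_⟩
      by_cases hi : I i ≤ P
      · exact hzero a (hi ha) _
      · obtain ⟨b, hbI, hbP⟩ := SetLike.not_le_iff_exists.mp hi
        obtain ⟨m', hm'⟩ := hfin {i₀, i}
        have e0 : m' = x i₀ :=
          sub_eq_zero.mp (hinj a₀ ha₀P _ (hm' i₀ (by simp) a₀ ha₀I))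
        have e1 : m' = x i :=
          sub_eq_zero.mp (hinj b hbP _ (hm' i (by simp) b hbI))
        rw [← e0, ← e1, sub_self, smul_zero]
    · push_neg at hex
      exact ⟨0, fun i a ha => hzero a (hex i ha) _⟩
  -- the embedding into the product
  set f : (ℕ →₀ R ⧸ P) →ₗ[R] (ℕ → R ⧸ P) := Finsupp.lcoeFun with hf
  have hf_apply : ∀ m : ℕ →₀ R ⧸ P, f m = ⇑m := fun m => rfl
  have finj : Function.Injective f := by
    intro p q hpq
    exact DFunLike.coe_injective hpq
  -- the range of f is a pure submodule of the product
  have hpure : IsPureSubmodule R (LinearMap.range f) := by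
    intro k l a e he
    obtain ⟨xs, hxs⟩ := he
    have hmem : ∀ i : Fin k, ∃ w : ℕ →₀ R ⧸ P, f w = (e i : ℕ → R ⧸ P) := fun i => (e i).2
    choose w hw using hmem
    classical
    set S : Finset ℕ := Finset.univ.biUnion fun i => (w i).support with hS
    refine ⟨fun j => ⟨fun n => if n ∈ S then xs j n else 0,
      ⟨Finsupp.onFinset S (fun n => if n ∈ S then xs j n else 0)
        (fun n hn => by by_contra hc; simp [hc] at hn), rfl⟩⟩, ?_⟩
    intro i
    funext n
    have hsum : (∑ j, a i j • xs j) n = (e i : ℕ → R ⧸ P) n := by rw [hxs i]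
    simp only [Finset.sum_apply, Pi.smul_apply] at hsum ⊢
    by_cases hn : n ∈ S
    · simpa [hn] using hsum
    · have hzero' : (e i : ℕ → R ⧸ P) n = 0 := by
        rw [← hw i, hf_apply]
        refine Finsupp.notMem_support_iff.mp ?_
        intro hmem'
        exact hn (Finset.mem_biUnion.mpr ⟨i, Finset.mem_univ i, hmem'⟩)
      simp [hn, hzero']
  -- pure-injectivity gives a retraction hh : (ℕ → R⧸P) → (ℕ →₀ R⧸P)
  obtain ⟨hh, hcomp⟩ := h (ℕ →₀ R ⧸ P) hsc (ℕ →₀ R ⧸ P) (ℕ → R ⧸ P) f finj hpure LinearMap.id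
  have hretr : ∀ m : ℕ →₀ R ⧸ P, hh (f m) = m := by
    intro m
    have := LinearMap.ext_iff.mp hcomp m
    simpa using this
  -- now the Baer argument: every nonzero element of R⧸P is invertible
  apply Ideal.Quotient.maximal_of_isField
  refine ⟨⟨0, 1, zero_ne_one⟩, mul_comm, ?_⟩
  intro ρ hρ
  obtain ⟨r, hr⟩ := Ideal.Quotient.mk_surjective (I := P) ρ
  classical
  set y : ℕ → (ℕ → R ⧸ P) := fun n k => if n ≤ k then ρ ^ (k - n) else 0 with hy
  set wn : ℕ → (ℕ →₀ R ⧸ P) := fun n => ∑ j ∈ Finset.range n, Finsupp.single j (ρ ^ j) with hwn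
  have hw_apply : ∀ n k, (wn n) k = if k < n then ρ ^ k else 0 := by
    intro n k
    rw [hwn]
    rw [Finsupp.finset_sum_apply]
    have : ∀ j, (Finsupp.single j (ρ ^ j)) k = if j = k then ρ ^ j else 0 := by
      intro j; rw [Finsupp.single_apply]
    simp only [this]
    rw [Finset.sum_ite_eq' (Finset.range n) k (fun j => ρ ^ j)]
    simp [Finset.mem_range]
  have key : ∀ n, f (wn n) + (r ^ n : R) • y n = y 0 := by
    intro n
    funext k
    simp only [Pi.add_apply, Pi.smul_apply, hf_apply]
    rw [hw_apply]
    have hy0 : y 0 k = ρ ^ k := by simp [hy]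
    rw [hy0]
    by_cases hk : k < n
    · have : ¬ n ≤ k := not_le.mpr hk
      simp [hy, hk, this]
    · have hnk : n ≤ k := not_lt.mp hk
      simp only [hy, hk, if_false, if_neg, hnk, if_true, zero_add]
      rw [smul_def, map_pow, hr, ← pow_add, Nat.add_sub_cancel' hnk]
  have happ : ∀ n, hh (y 0) = wn n + (r ^ n : R) • hh (y n) := by
    intro n
    have hk := congrArg hh (key n)
    rw [map_add, map_smul, hretr] at hk
    exact hk.symm
  obtain ⟨N, hN⟩ := Infinite.exists_notMem_finset (hh (y 0)).support
  have hFN : (hh (y 0)) N = 0 := Finsupp.notMem_support_iff.mp hN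
  set d : R ⧸ P := (hh (y (N + 1))) N with hd
  have hval : (0 : R ⧸ P) = ρ ^ N + ρ ^ (N + 1) * d := by
    have h3 := happ (N + 1)
    have h4 := congrArg (fun F : ℕ →₀ R ⧸ P => F N) h3
    simp only [Finsupp.add_apply, Finsupp.smul_apply] at h4
    rw [hFN, hw_apply] at h4
    simp only [Nat.lt_succ_self, if_pos] at h4
    rw [smul_def, map_pow, hr] at h4
    exact h4
  have hfac : ρ ^ N * (1 + ρ * d) = 0 := by
    have : ρ ^ (N + 1) = ρ ^ N * ρ := pow_succ ρ N
    linear_combination (-1 : R ⧸ P) * hval + d * this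
  have h5 : 1 + ρ * d = 0 := by
    rcases mul_eq_zero.mp hfac with h6 | h6
    · exact absurd h6 (pow_ne_zero N hρ)
    · exact h6
  exact ⟨-d, by linear_combination (-1 : R ⧸ P) * h5⟩
end

section
/- Let R be a ring, E an FP-injective left R-module, and U a pure submodule of E. If H is an injective hull of E, then E/U is a pure submodule of H/U; consequently, if H/U being a quotient of an injective by an FP-injectively-embedded pure submodule is FP-injective, then E/U is FP-injective. -/
/-!
An FP-injective module `E` is pure in every extension `H`: a finite system with constants in `E`
that is solvable in `H` amounts to extending a map from a submodule of `R^l` with finitely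
presented cokernel, and `Ext¹` of that cokernel against `E` vanishes, so the extension can be
taken into `E`. Purity passes to `E/U ⊆ H/U`, because a solution in `H/U` lifts to `H` with an
error in `j(U) ⊆ E`. Finally, a pure submodule `M` of an FP-injective `Q` is FP-injective: an
extension of `M` by a finitely presented `F` splits once pushed out to `Q`, and the remaining
obstruction, a map `F → Q/M`, lifts to `Q` by purity.
-/

universe u v

section

variable {R : Type u} [Ring R]

theorem LinearMap.exists_comp_eq_of_surjective_of_ker_le {M N P : Type*} [AddCommGroup M]
    [Module R M] [AddCommGroup N] [Module R N] [AddCommGroup P] [Module R P]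
    (π : M →ₗ[R] N) (hπ : Function.Surjective π) (f : M →ₗ[R] P)
    (h : LinearMap.ker π ≤ LinearMap.ker f) : ∃ g : N →ₗ[R] P, g ∘ₗ π = f :=
  ⟨(LinearMap.ker π).liftQ f h ∘ₗ (π.quotKerEquivOfSurjective hπ).symm.toLinearMap,
    LinearMap.ext fun x => by simp⟩

/-- The splitting of the pushout of `0 → M → X → F → 0` along `f` extends `f` to `X`. -/
theorem Ext1Vanishes.exists_comp_eq {F Q M X : Type v} [AddCommGroup F] [Module R F]
    [AddCommGroup Q] [Module R Q] [AddCommGroup M] [Module R M] [AddCommGroup X] [Module R X]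
    (hQ : Ext1Vanishes R F Q) (i : M →ₗ[R] X) (p : X →ₗ[R] F) (hi : Function.Injective i)
    (hp : Function.Surjective p) (hexact : LinearMap.ker p = LinearMap.range i)
    (f : M →ₗ[R] Q) : ∃ g : X →ₗ[R] Q, g ∘ₗ i = f := by
  set W := LinearMap.range (f.prod (-i))
  set ιQ : Q →ₗ[R] (Q × X) ⧸ W := W.mkQ ∘ₗ LinearMap.inl R Q X
  have hpW : W ≤ LinearMap.ker (p ∘ₗ LinearMap.snd R Q X) := by
    rintro _ ⟨m, rfl⟩
    have : i m ∈ LinearMap.ker p := hexact ▸ LinearMap.mem_range_self i m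
    simpa using this
  set πF : (Q × X) ⧸ W →ₗ[R] F := W.liftQ _ hpW
  have hglue : ∀ q m, W.mkQ (q, i m) = ιQ (q + f m) := by
    intro q m
    refine (Submodule.Quotient.eq W).mpr ⟨-m, ?_⟩
    simp
  have hιQ : Function.Injective ιQ := by
    refine (injective_iff_map_eq_zero _).mpr fun q hq => ?_
    obtain ⟨m, hm⟩ := (Submodule.Quotient.mk_eq_zero W).mp hq
    obtain ⟨hfm, him⟩ := Prod.ext_iff.mp hm
    have : m = 0 := hi (by simpa using him)
    simpa [this] using hfm.symm
  have hπF : Function.Surjective πF := fun z => by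
    obtain ⟨x, rfl⟩ := hp z
    exact ⟨W.mkQ (0, x), by simp [πF]⟩
  have hexactπF : LinearMap.ker πF = LinearMap.range ιQ := by
    ext z
    obtain ⟨⟨q, x⟩, rfl⟩ := W.mkQ_surjective z
    constructor
    · intro hz
      obtain ⟨m, rfl⟩ : x ∈ LinearMap.range i := hexact ▸ by simpa [πF] using hz
      exact ⟨q + f m, (hglue q m).symm⟩
    · rintro ⟨q', hq'⟩
      simp [← hq', πF, ιQ]
  obtain ⟨s, hs⟩ := hQ _ ιQ πF hιQ hπF hexactπF
  refine ⟨s ∘ₗ W.mkQ ∘ₗ LinearMap.inr R Q X, LinearMap.ext fun m => ?_⟩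
  have := hglue 0 m
  simp only [LinearMap.comp_apply, LinearMap.inr_apply, zero_add] at this ⊢
  rw [this, ← LinearMap.comp_apply s, hs, LinearMap.id_apply]

theorem IsFPInjective.exists_comp_eq_of_ker_le {E : Type u} [AddCommGroup E] [Module R E]
    (hE : IsFPInjective R E) {k l : ℕ} (α : (Fin k → R) →ₗ[R] (Fin l → R))
    (g : (Fin k → R) →ₗ[R] E) (h : LinearMap.ker α ≤ LinearMap.ker g) :
    ∃ e : (Fin l → R) →ₗ[R] E, e ∘ₗ α = g := by
  set A := LinearMap.range α
  obtain ⟨g', hg'⟩ := α.rangeRestrict.exists_comp_eq_of_surjective_of_ker_le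
    α.surjective_rangeRestrict g (by rwa [LinearMap.ker_rangeRestrict])
  have : Module.FinitePresentation R ((Fin l → R) ⧸ A) :=
    Module.finitePresentation_of_surjective A.mkQ A.mkQ_surjective
      (by rw [Submodule.ker_mkQ]; exact Submodule.fg_range α)
  obtain ⟨e, he⟩ := (hE _ this).exists_comp_eq A.subtype A.mkQ A.injective_subtype
    A.mkQ_surjective (by rw [Submodule.ker_mkQ, Submodule.range_subtype]) g'
  exact ⟨e, by rw [← hg', ← he]; rfl⟩

theorem IsFPInjective.isPureSubmodule_range {E H : Type u} [AddCommGroup E] [Module R E]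
    [AddCommGroup H] [Module R H] (hE : IsFPInjective R E) (j : E →ₗ[R] H)
    (hj : Function.Injective j) : IsPureSubmodule R (LinearMap.range j) := by
  classical
  rintro k l a e ⟨x, hx⟩
  choose c hc using fun i => (e i).2
  set α := Fintype.linearCombination R a
  set g := Fintype.linearCombination R c
  have hcomm : j ∘ₗ g = Fintype.linearCombination R x ∘ₗ α := by
    ext i
    simp [α, g, hc, hx, Fintype.linearCombination_apply]
  obtain ⟨e', he'⟩ := hE.exists_comp_eq_of_ker_le α g fun v hv => hj <| by
    simpa [LinearMap.mem_ker.mp hv] using LinearMap.congr_fun hcomm v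
  refine ⟨fun t => ⟨j (e' (Pi.single t 1)), LinearMap.mem_range_self j _⟩, fun i => ?_⟩
  calc ∑ t, a i t • j (e' (Pi.single t 1))
      = j (e' (∑ t, a i t • Pi.single t 1)) := by simp only [map_sum, map_smul]
    _ = j (e' (α (Pi.single i 1))) := by simp [α, ← pi_eq_sum_univ']
    _ = e i := by rw [← LinearMap.comp_apply e', he']; simp [g, hc]

theorem IsPureSubmodule.map_of_surjective {M M' : Type v} [AddCommGroup M] [Module R M]
    [AddCommGroup M'] [Module R M'] {N : Submodule R M} (hN : IsPureSubmodule R N)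
    (π : M →ₗ[R] M') (hπ : Function.Surjective π) (hker : LinearMap.ker π ≤ N) :
    IsPureSubmodule R (N.map π) := by
  rintro k l a e ⟨x, hx⟩
  choose n hn hne using fun i => (e i).2
  choose x' hx' using fun t => hπ (x t)
  have hmem : ∀ i, ∑ t, a i t • x' t ∈ N := fun i => by
    have : ∑ t, a i t • x' t - n i ∈ N := hker (by simp [map_sum, hx', hx, hne])
    simpa using N.add_mem this (hn i)
  obtain ⟨y, hy⟩ := hN k l a (fun i => ⟨_, hmem i⟩) ⟨x', fun i => rfl⟩
  refine ⟨fun t => ⟨π (y t), Submodule.mem_map_of_mem (y t).2⟩, fun i => ?_⟩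
  have := congrArg π (hy i)
  simp only [map_sum, map_smul, hx'] at this
  exact this.trans (hx i)

theorem IsPureSubmodule.exists_mkQ_comp_eq {Q F : Type v} [AddCommGroup Q] [Module R Q]
    [AddCommGroup F] [Module R F] [Module.FinitePresentation R F] {N : Submodule R Q}
    (hN : IsPureSubmodule R N) (g : F →ₗ[R] Q ⧸ N) : ∃ u : F →ₗ[R] Q, N.mkQ ∘ₗ u = g := by
  classical
  obtain ⟨n, π, hπ⟩ := Module.Finite.exists_fin' R F
  obtain ⟨k, r, hr⟩ := Submodule.fg_iff_exists_fin_generating_family.mp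
    (Module.FinitePresentation.fg_ker π hπ)
  choose q hq using fun t => N.mkQ_surjective (g (π (Pi.single t 1)))
  set q₀ := Fintype.linearCombination R q
  have hq₀ : N.mkQ ∘ₗ q₀ = g ∘ₗ π := by
    ext t
    simp [q₀, hq]
  have hrel : ∀ i, q₀ (r i) ∈ N := fun i => by
    have hri : r i ∈ LinearMap.ker π := hr ▸ Submodule.subset_span ⟨i, rfl⟩
    rw [← Submodule.Quotient.mk_eq_zero, ← Submodule.mkQ_apply, ← LinearMap.comp_apply, hq₀,
      LinearMap.comp_apply, LinearMap.mem_ker.mp hri, map_zero]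
  -- correcting the lifts `q` by a solution `y` in `N` of the relations makes them hold in `Q`
  obtain ⟨y, hy⟩ := hN k n r (fun i => ⟨_, hrel i⟩) ⟨q, fun i => rfl⟩
  set u₀ := Fintype.linearCombination R (fun t => q t - (y t : Q))
  have hker : LinearMap.ker π ≤ LinearMap.ker u₀ := by
    rw [← hr, Submodule.span_le]
    rintro _ ⟨i, rfl⟩
    simp [u₀, Fintype.linearCombination_apply, smul_sub, Finset.sum_sub_distrib, hy i, q₀]
  obtain ⟨u, hu⟩ := π.exists_comp_eq_of_surjective_of_ker_le hπ u₀ hker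
  refine ⟨u, (LinearMap.cancel_right hπ).mp ?_⟩
  rw [LinearMap.comp_assoc, hu, ← hq₀]
  ext t
  simp [u₀, q₀]

theorem IsFPInjective.of_isPureSubmodule_range {M Q : Type v} [AddCommGroup M] [Module R M]
    [AddCommGroup Q] [Module R Q] (hQ : IsFPInjective R Q) (ι : M →ₗ[R] Q)
    (hι : Function.Injective ι) (hpure : IsPureSubmodule R (LinearMap.range ι)) :
    IsFPInjective R M := by
  intro F _ _ hF X _ _ i p hi hp hexact
  set N := LinearMap.range ι
  obtain ⟨t, ht⟩ := (hQ F hF).exists_comp_eq i p hi hp hexact ι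
  obtain ⟨g, hg⟩ := p.exists_comp_eq_of_surjective_of_ker_le hp (N.mkQ ∘ₗ t) <| by
    rw [hexact]
    rintro _ ⟨m, rfl⟩
    simp [← LinearMap.comp_apply t i, ht, N]
  obtain ⟨u, hu⟩ := hpure.exists_mkQ_comp_eq g
  -- `u ∘ p` vanishes on `M`, so `t - u ∘ p` still extends `ι`, now with values in `N`
  have hmem : ∀ x, (t - u ∘ₗ p) x ∈ N := fun x => by
    rw [← Submodule.Quotient.mk_eq_zero, ← Submodule.mkQ_apply, LinearMap.sub_apply, map_sub,
      sub_eq_zero]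
    calc N.mkQ (t x) = g (p x) := (LinearMap.congr_fun hg x).symm
      _ = N.mkQ ((u ∘ₗ p) x) := (LinearMap.congr_fun hu (p x)).symm
  refine ⟨(LinearEquiv.ofInjective ι hι).symm ∘ₗ (t - u ∘ₗ p).codRestrict N hmem,
    LinearMap.ext fun m => ?_⟩
  rw [LinearMap.comp_apply, LinearMap.comp_apply, LinearEquiv.coe_coe,
    LinearEquiv.symm_apply_eq]
  ext
  have hpm : i m ∈ LinearMap.ker p := hexact ▸ LinearMap.mem_range_self i m
  simp [← LinearMap.comp_apply t i, ht, LinearMap.mem_ker.mp hpm, N]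

end

theorem quotient_pure_in_injective_hull_quotient_general (R : Type u) [Ring R]
    (E H : Type u) [AddCommGroup E] [Module R E] [AddCommGroup H] [Module R H]
    (hE : IsFPInjective R E) (U : Submodule R E)
    (j : E →ₗ[R] H) (hj : Function.Injective j) :
    Function.Injective (Submodule.mapQ U (U.map j) j (Submodule.le_comap_map j U)) ∧
    IsPureSubmodule R
      (LinearMap.range (Submodule.mapQ U (U.map j) j (Submodule.le_comap_map j U))) ∧
    (IsFPInjective R (H ⧸ U.map j) → IsFPInjective R (E ⧸ U)) := by
  set φ := Submodule.mapQ U (U.map j) j (Submodule.le_comap_map j U)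
  have hφ : Function.Injective φ := by
    rw [← LinearMap.ker_eq_bot, Submodule.ker_mapQ, Submodule.comap_map_eq_of_injective hj,
      Submodule.mkQ_map_self]
  have hpure : IsPureSubmodule R (LinearMap.range φ) := by
    rw [Submodule.range_mapQ]
    refine (hE.isPureSubmodule_range j hj).map_of_surjective _ (Submodule.mkQ_surjective _) ?_
    rw [Submodule.ker_mkQ]
    exact LinearMap.map_le_range
  exact ⟨hφ, hpure, fun hQ => hQ.of_isPureSubmodule_range φ hφ hpure⟩

/-- If `E` is FP-injective, `U` a pure submodule of `E` and `H` an injective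
hull of `E` (via `j`), then the induced map `E/U → H/j(U)` is injective with pure image;
consequently, if `H/j(U)` is FP-injective then so is `E/U`. -/
theorem quotient_pure_in_injective_hull_quotient (R : Type u) [Ring R]
    (E H : Type u) [AddCommGroup E] [Module R E] [AddCommGroup H] [Module R H]
    (hE : IsFPInjective R E) (U : Submodule R E) (hU : IsPureSubmodule R U)
    (j : E →ₗ[R] H) (hj : Function.Injective j) (hinj : Module.Injective R H)
    (hess : IsEssentialSubmodule R (LinearMap.range j)) :
    Function.Injective (Submodule.mapQ U (U.map j) j (Submodule.le_comap_map j U)) ∧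
    IsPureSubmodule R
      (LinearMap.range (Submodule.mapQ U (U.map j) j (Submodule.le_comap_map j U))) ∧
    (IsFPInjective R (H ⧸ U.map j) → IsFPInjective R (E ⧸ U)) :=
  quotient_pure_in_injective_hull_quotient_general R E H hE U j hj
end

section
/- Let R be a commutative ring such that every R-module M with Ext¹_R(C, M) = 0 for all cyclic flat R-modules C is cotorsion. Then R_P is a perfect ring for every maximal ideal P. -/
universe u v

/-!
Write `S = R_P`. Every `S`-module `K` satisfies `Ext¹_R(R/A, K) = 0` for a pure ideal `A`, by
Baer's criterion for the cyclic module `R/A`: a map `A → K` is multiplication by an element.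
Either some `a₀ ∈ A` lies outside `P` and acts invertibly on `K`, or `A ⊆ P`; then each
`a ∈ A` has a `u` with `a u = 0` and `1 - u ∈ A ⊆ P`, so `u` acts invertibly and kills the
image of `a`. The hypothesis thus gives `Ext¹_R(N, K) = 0` for every flat `S`-module `N` and
every `S`-module `K`. Taking `K` the kernel of a free `S`-presentation of `N`, the resulting
`R`-linear splitting is `S`-linear, so `N` is a direct summand of a free `S`-module.
-/

open LinearMap

theorem bijective_smul_of_mem_of_isLocalization {R : Type*} [CommRing R] (M : Submonoid R)
    (S : Type*) [CommRing S] [Algebra R S] [IsLocalization M S]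
    (K : Type*) [AddCommGroup K] [Module S K] [Module R K] [IsScalarTower R S K]
    {b : R} (hb : b ∈ M) : Function.Bijective fun k : K => b • k :=
  (Module.End.isUnit_iff _).mp ((isLocalizedModule_id M K S).map_units ⟨b, hb⟩)

section Cyclic

variable {R : Type u} [CommRing R] {C : Type u} [AddCommGroup C] [Module R C] {c : C}

theorem exists_mul_eq_zero_and_smul_eq_self_of_flat [Module.Flat R C]
    (hc : Submodule.span R {c} = ⊤) {a : R} (ha : a • c = 0) :
    ∃ u : R, a * u = 0 ∧ u • c = c := by
  obtain ⟨κ, b, y, hy, hb⟩ := Module.Flat.isTrivialRelation_of_sum_smul_eq_zero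
    (f := fun _ : Unit => a) (x := fun _ => c) (by simpa using ha)
  choose r hr using fun j => Submodule.mem_span_singleton.mp (hc ▸ Submodule.mem_top (x := y j))
  refine ⟨∑ j, b () j * r j, ?_, ?_⟩
  · simp only [Finset.mul_sum, ← mul_assoc]
    exact Finset.sum_eq_zero fun j _ => by simpa using congrArg (· * r j) (hb j)
  · simp only [Finset.sum_smul, mul_smul, hr]
    exact (hy ()).symm

theorem exists_comp_eq_id_of_smul_eq_zero {X : Type*} [AddCommGroup X] [Module R X]
    (hc : Submodule.span R {c} = ⊤) {p : X →ₗ[R] C} {x : X} (hx : p x = c)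
    (hann : ∀ a : R, a • c = 0 → a • x = 0) :
    ∃ g : C →ₗ[R] X, p ∘ₗ g = LinearMap.id := by
  have hsurj : Function.Surjective (toSpanSingleton R C c) := by
    rwa [← range_eq_top, range_toSpanSingleton]
  let g := (ker (toSpanSingleton R C c)).liftQ (toSpanSingleton R X x) hann ∘ₗ
    ((toSpanSingleton R C c).quotKerEquivOfSurjective hsurj).symm.toLinearMap
  have hg : g c = x := by
    have : ((toSpanSingleton R C c).quotKerEquivOfSurjective hsurj).symm c =
        Submodule.Quotient.mk 1 := by
      rw [LinearEquiv.symm_apply_eq]; exact (one_smul R c).symm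
    simp only [g, comp_apply, LinearEquiv.coe_coe, this]
    exact (Submodule.liftQ_apply _ _ 1).trans (one_smul R x)
  refine ⟨g, LinearMap.ext fun z => ?_⟩
  obtain ⟨a, rfl⟩ := hsurj z
  simp only [comp_apply, toSpanSingleton_apply, hg, map_smul, hx, id_apply]

theorem ext1Vanishes_of_forall_exists_smul_eq {M : Type u} [AddCommGroup M] [Module R M]
    (hc : Submodule.span R {c} = ⊤)
    (hM : ∀ f : ker (toSpanSingleton R C c) →ₗ[R] M, ∃ m : M, ∀ a, f a = (a : R) • m) :
    Ext1Vanishes R C M := by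
  intro X _ _ i p hi hp hker
  have hexact : Function.Exact i p := exact_iff.mpr hker
  obtain ⟨x, hx⟩ := hp c
  have hrange : ∀ a : ker (toSpanSingleton R C c), (a : R) • x ∈ range i := fun a => by
    rw [← hker, mem_ker, map_smul, hx]
    exact a.2
  let f := (LinearEquiv.ofInjective i hi).symm.toLinearMap ∘ₗ
    ((toSpanSingleton R X x ∘ₗ (ker (toSpanSingleton R C c)).subtype).codRestrict _ hrange)
  have hf : ∀ a, i (f a) = (a : R) • x := fun a =>
    congrArg Subtype.val ((LinearEquiv.ofInjective i hi).apply_symm_apply _)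
  obtain ⟨m, hm⟩ := hM f
  obtain ⟨g, hg⟩ := exists_comp_eq_id_of_smul_eq_zero hc (p := p) (x := x - i m)
    (by rw [map_sub, hx, hexact.apply_apply_eq_zero, sub_zero])
    (fun a ha => by rw [smul_sub, ← map_smul, ← hm ⟨a, ha⟩, hf, sub_self])
  exact ⟨_, ((hexact.splitInjectiveEquiv hp).symm
    (hexact.splitSurjectiveEquiv hi ⟨g, hg⟩)).2⟩

theorem exists_smul_eq_of_flat_of_isLocalizationAtPrime [Module.Flat R C]
    (hc : Submodule.span R {c} = ⊤) (P : Ideal R) [P.IsPrime]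
    (S : Type*) [CommRing S] [Algebra R S] [IsLocalization.AtPrime S P]
    {K : Type*} [AddCommGroup K] [Module S K] [Module R K] [IsScalarTower R S K]
    (f : ker (toSpanSingleton R C c) →ₗ[R] K) : ∃ m : K, ∀ a, f a = (a : R) • m := by
  have hbij : ∀ {b : R}, b ∉ P → Function.Bijective fun k : K => b • k := fun hb =>
    bijective_smul_of_mem_of_isLocalization P.primeCompl S K hb
  by_cases hA : ∃ a₀ : ker (toSpanSingleton R C c), (a₀ : R) ∉ P
  · obtain ⟨a₀, ha₀⟩ := hA
    obtain ⟨m, hm⟩ := (hbij ha₀).2 (f a₀)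
    refine ⟨m, fun a => (hbij ha₀).1 ?_⟩
    calc (a₀ : R) • f a = f ((a₀ : R) • a) := (map_smul f _ a).symm
      _ = f ((a : R) • a₀) := congrArg f (Subtype.ext (mul_comm _ _))
      _ = (a₀ : R) • (a : R) • m := by rw [map_smul, ← hm, smul_comm]
  · push Not at hA
    refine ⟨0, fun a => ?_⟩
    obtain ⟨u, hau, huc⟩ := exists_mul_eq_zero_and_smul_eq_self_of_flat hc a.2
    -- `1 - u` kills `c`, so it lies in `P`, and therefore `u` does not.
    have hu : u ∉ P := fun hu => Ideal.IsPrime.ne_top ‹_› <| P.eq_top_of_isUnit_mem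
      (by simpa using P.add_mem (hA ⟨1 - u, by simp [sub_smul, huc]⟩) hu) isUnit_one
    refine (hbij hu).1 ?_
    calc u • f a = f (u • a) := (map_smul f u a).symm
      _ = 0 := by rw [show u • a = 0 from Subtype.ext (by simpa [mul_comm] using hau), map_zero]
      _ = u • (a : R) • (0 : K) := by rw [smul_zero, smul_zero]

end Cyclic

theorem projective_of_forall_ext1Vanishes_of_isLocalization {R S : Type u} [CommRing R]
    [CommRing S] [Algebra R S] (M : Submonoid R) [IsLocalization M S]
    {N : Type u} [AddCommGroup N] [Module S N] [Module R N] [IsScalarTower R S N]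
    (hN : ∀ (K : Type u) [AddCommGroup K] [Module S K] [Module R K] [IsScalarTower R S K],
      Ext1Vanishes R N K) : Module.Projective S N := by
  let π := Finsupp.linearCombination S (id : N → N)
  have hπ : Function.Surjective π := fun n => ⟨Finsupp.single n 1, by simp [π]⟩
  have hexact : Function.Exact (ker π).subtype π := exact_subtype_ker_map π
  obtain ⟨s, hs⟩ := hN (ker π) (N →₀ S) ((ker π).subtype.restrictScalars R)
    (π.restrictScalars R) Subtype.val_injective hπ (by ext; simp)
  -- an `R`-linear retraction between `S`-modules is automatically `S`-linear
  let r := hexact.splitInjectiveEquiv hπ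
    ⟨s.extendScalarsOfIsLocalization M S, LinearMap.ext fun x => LinearMap.congr_fun hs x⟩
  exact .of_split _ π ((hexact.splitSurjectiveEquiv Subtype.val_injective).symm r).2

/-- If every `R`-module `M` with `Ext¹(C, M) = 0` for all cyclic flat `C`
is cotorsion, then `R_P` is perfect for every maximal ideal `P`. -/
theorem localization_perfect_of_baer_criterion (R : Type u) [CommRing R]
    (h : ∀ (M : Type u) [AddCommGroup M] [Module R M],
      (∀ (C : Type u) [AddCommGroup C] [Module R C],
        (∃ x : C, Submodule.span R {x} = ⊤) → Module.Flat R C → Ext1Vanishes R C M) →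
      ∀ (G : Type u) [AddCommGroup G] [Module R G], Module.Flat R G → Ext1Vanishes R G M)
    (P : Ideal R) (hP : P.IsMaximal) :
    ∀ (N : Type u) [AddCommGroup N] [Module (Localization.AtPrime P) N],
      Module.Flat (Localization.AtPrime P) N →
      Module.Projective (Localization.AtPrime P) N := by
  intro N _ _ _
  have := hP.isPrime
  let : Module R N := Module.compHom N (algebraMap R (Localization.AtPrime P))
  have : IsScalarTower R (Localization.AtPrime P) N := IsScalarTower.of_compHom _ _ _
  exact projective_of_forall_ext1Vanishes_of_isLocalization P.primeCompl fun K _ _ _ _ =>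
    h K (fun C _ _ ⟨c, hc⟩ _ => ext1Vanishes_of_forall_exists_smul_eq hc
      (exists_smul_eq_of_flat_of_isLocalizationAtPrime hc P (Localization.AtPrime P)))
    N (Module.Flat.trans R (Localization.AtPrime P) N)
end

section
/- Let R be a commutative ring such that R_P is strongly perfect (every P-flat R_P-module is projective) for each maximal ideal P. Then every P-flat R-module is flat. -/
universe u v

theorem IsPFlat.localizedModule {R : Type u} [CommRing R] (S : Submonoid R) {M : Type v}
    [AddCommGroup M] [Module R M] (hM : IsPFlat R M) :
    IsPFlat (Localization S) (LocalizedModule S M) := by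
  intro ρ m hρm
  induction ρ using Localization.induction_on with | H ru => ?_
  obtain ⟨r, u⟩ := ru
  induction m using LocalizedModule.induction_on with | h m v => ?_
  obtain ⟨c, hc⟩ : ∃ c : S, ((c : R) * r) • m = 0 := by
    rw [LocalizedModule.mk_smul_mk, ← LocalizedModule.zero_mk (1 : S),
      LocalizedModule.mk_eq] at hρm
    obtain ⟨c, hc⟩ := hρm
    exact ⟨c, by simpa [Submonoid.smul_def, mul_smul] using hc⟩
  set T : Set (LocalizedModule S M) :=
    {x | ∃ s : Localization S, ∃ y, Localization.mk r u * s = 0 ∧ x = s • y}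
  -- a generator `s • y` with `c r s = 0` becomes `(c s / 1) • (y / c)`, and `(r / u) (c s / 1) = 0`
  have hspan : Submodule.span R {x : M | ∃ s : R, ∃ y : M, (c : R) * r * s = 0 ∧ x = s • y} ≤
      ((Submodule.span (Localization S) T).restrictScalars R).comap
        (LocalizedModule.mkLinearMap S M) := by
    rw [Submodule.span_le]
    rintro _ ⟨s, y, hs, rfl⟩
    refine Submodule.subset_span ⟨Localization.mk ((c : R) * s) 1, LocalizedModule.mk y c, ?_, ?_⟩
    · rw [Localization.mk_mul, mul_left_comm, ← mul_assoc, hs, Localization.mk_zero]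
    · rw [LocalizedModule.mkLinearMap_apply, LocalizedModule.mk_smul_mk, LocalizedModule.mk_eq]
      exact ⟨1, by simp [Submonoid.smul_def, mul_smul]⟩
  have hmk : LocalizedModule.mk m v =
      Localization.mk 1 v • LocalizedModule.mkLinearMap S M m := by
    rw [LocalizedModule.mkLinearMap_apply, LocalizedModule.mk_smul_mk, one_smul, mul_one]
  rw [hmk]
  exact Submodule.smul_mem _ _ (hspan (hM _ m hc))

/-- If `R_P` is strongly perfect (every P-flat module is projective) for
every maximal ideal `P`, then every P-flat `R`-module is flat. -/
theorem flat_of_pflat_of_locally_strongly_perfect (R : Type u) [CommRing R]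
    (hsp : ∀ (P : Ideal R) (hP : P.IsMaximal), ∀ (N : Type u) [AddCommGroup N]
      [Module (Localization.AtPrime P) N],
      IsPFlat (Localization.AtPrime P) N → Module.Projective (Localization.AtPrime P) N)
    (M : Type u) [AddCommGroup M] [Module R M] (hM : IsPFlat R M) :
    Module.Flat R M := by
  refine Module.flat_of_localized_maximal M fun P hP => ?_
  have : Module.Projective (Localization.AtPrime P) (LocalizedModule P.primeCompl M) :=
    hsp P hP _ (hM.localizedModule P.primeCompl)
  exact (Module.flat_iff_of_isLocalization (Localization.AtPrime P) P.primeCompl _).mp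
    Module.Flat.of_projective
end

section
/- Let R be a ring and A a two-sided ideal. If every RD-essential extension of left R-modules is essential, then every RD-essential extension of left R/A-modules is essential. -/
universe u v

/-! The quotient map `f : R → R/A` is a surjective ring homomorphism, so an `R/A`-module is an
`R`-module through `f` with the same submodules. Both RD-purity of `(M' + K)/K` in `N/K` and
essentiality only mention these submodules and the scalars `f r`, so an RD-essential extension
of `R/A`-modules is an RD-essential extension of `R`-modules, hence essential. -/

theorem isRDPureSubmodule_map_mkQ_iff {R M : Type*} [Ring R] [AddCommGroup M] [Module R M]
    (p K : Submodule R M) :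
    IsRDPureSubmodule R (p.map K.mkQ) ↔
      ∀ (r : R), ∀ x ∈ p, ∀ m : M, r • m - x ∈ K → ∃ y ∈ p, r • y - x ∈ K := by
  constructor
  · intro hpure r x hx m hm
    obtain ⟨_, ⟨y, hy, rfl⟩, hry⟩ :=
      hpure r (K.mkQ x) ⟨x, hx, rfl⟩ ⟨K.mkQ m, (Submodule.Quotient.eq K).mpr hm⟩
    exact ⟨y, hy, (Submodule.Quotient.eq K).mp hry⟩
  · rintro hcond r _ ⟨x, hx, rfl⟩ ⟨m, hm⟩
    obtain ⟨m, rfl⟩ := K.mkQ_surjective m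
    obtain ⟨y, hy, hry⟩ := hcond r x hx m ((Submodule.Quotient.eq K).mp hm)
    exact ⟨K.mkQ y, ⟨y, hy, rfl⟩, (Submodule.Quotient.eq K).mpr hry⟩

namespace Submodule

variable {R S N : Type*} [Ring R] [Ring S] [AddCommGroup N] [Module R N] [Module S N]
  {f : R →+* S}

def restrictScalarsOrderIso (hf : ∀ (r : R) (n : N), f r • n = r • n)
    (hsurj : Function.Surjective f) : Submodule S N ≃o Submodule R N where
  toFun p :=
    { carrier := p
      add_mem' := p.add_mem
      zero_mem' := p.zero_mem
      smul_mem' := fun r _ hx => hf r _ ▸ p.smul_mem (f r) hx }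
  invFun K :=
    { carrier := K
      add_mem' := K.add_mem
      zero_mem' := K.zero_mem
      smul_mem' := fun s x hx => by
        obtain ⟨r, rfl⟩ := hsurj s
        exact hf r x ▸ K.smul_mem r hx }
  left_inv _ := rfl
  right_inv _ := rfl
  map_rel_iff' := Iff.rfl

variable (hf : ∀ (r : R) (n : N), f r • n = r • n) (hsurj : Function.Surjective f)

@[simp]
theorem mem_restrictScalarsOrderIso_symm {K : Submodule R N} {x : N} :
    x ∈ (restrictScalarsOrderIso hf hsurj).symm K ↔ x ∈ K :=
  Iff.rfl

theorem isRDPureSubmodule_restrictScalarsOrderIso {p : Submodule S N}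
    (hp : IsRDPureSubmodule S p) : IsRDPureSubmodule R (restrictScalarsOrderIso hf hsurj p) := by
  intro r n hn hdiv
  simp only [← hf] at hdiv ⊢
  exact hp (f r) n hn hdiv

theorem isRDPureSubmodule_map_mkQ_restrictScalarsOrderIso_symm {p : Submodule S N}
    {K : Submodule R N}
    (hpure : IsRDPureSubmodule R ((restrictScalarsOrderIso hf hsurj p).map K.mkQ)) :
    IsRDPureSubmodule S (p.map ((restrictScalarsOrderIso hf hsurj).symm K).mkQ) := by
  rw [isRDPureSubmodule_map_mkQ_iff] at hpure ⊢
  intro s x hx m hm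
  obtain ⟨r, rfl⟩ := hsurj s
  simp only [mem_restrictScalarsOrderIso_symm, hf] at hm ⊢
  exact hpure r x hx m hm

theorem isRDEssential_restrictScalarsOrderIso {p : Submodule S N} (hp : IsRDEssential S p) :
    IsRDEssential R (restrictScalarsOrderIso hf hsurj p) := by
  let e := restrictScalarsOrderIso hf hsurj
  refine ⟨isRDPureSubmodule_restrictScalarsOrderIso hf hsurj hp.1, fun K hK hKp hpure => ?_⟩
  refine hp.2 (e.symm K) (by simpa using hK) ?_
    (isRDPureSubmodule_map_mkQ_restrictScalarsOrderIso_symm hf hsurj hpure)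
  rw [← e.symm_apply_apply p, ← e.symm.map_inf, hKp, e.symm.map_bot]

theorem isEssentialSubmodule_of_restrictScalarsOrderIso {p : Submodule S N}
    (hp : IsEssentialSubmodule R (restrictScalarsOrderIso hf hsurj p)) :
    IsEssentialSubmodule S p := by
  let e := restrictScalarsOrderIso hf hsurj
  intro K hKp
  simpa using hp (e K) (by rw [← e.map_inf, hKp, e.map_bot])

end Submodule

open Submodule in
theorem isEssentialSubmodule_of_isRDEssential_of_surjective {R S : Type*} [Ring R] [Ring S]
    (f : R →+* S) (hsurj : Function.Surjective f)
    (h : ∀ (N : Type v) [AddCommGroup N] [Module R N] (M' : Submodule R N),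
      IsRDEssential R M' → IsEssentialSubmodule R M')
    (N : Type v) [AddCommGroup N] [Module S N] (M' : Submodule S N) (hM' : IsRDEssential S M') :
    IsEssentialSubmodule S M' :=
  letI : Module R N := Module.compHom N f
  have hf : ∀ (r : R) (n : N), f r • n = r • n := fun _ _ => rfl
  isEssentialSubmodule_of_restrictScalarsOrderIso hf hsurj
    (h N _ (isRDEssential_restrictScalarsOrderIso hf hsurj hM'))

/-- If every RD-essential extension of left `R`-modules is essential, then
the same holds for left modules over the quotient of `R` by any two-sided ideal. -/
theorem rd_essential_quotient_ring (R : Type u) [Ring R] (I : TwoSidedIdeal R)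
    (h : ∀ (N : Type u) [AddCommGroup N] [Module R N] (M' : Submodule R N),
      IsRDEssential R M' → IsEssentialSubmodule R M') :
    ∀ (N : Type u) [AddCommGroup N] [Module I.ringCon.Quotient N]
      (M' : Submodule I.ringCon.Quotient N),
      IsRDEssential I.ringCon.Quotient M' → IsEssentialSubmodule I.ringCon.Quotient M' :=
  isEssentialSubmodule_of_isRDEssential_of_surjective I.ringCon.mk' I.ringCon.mk'_surjective h
end

section
/- Let R be a commutative ring with Krull dimension 0 and nilradical N. If A is the kernel of the natural map R → ∏_{P∈X} R_P where X = {P maximal : PR_P = 0}, then R/A is a von Neumann regular ring. -/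
universe u v

/-!
In a ring of Krull dimension 0 every `a` satisfies `a ^ n * (1 - a * x) = 0` for some `n` and `x`:
otherwise some prime `p` avoids the multiplicative set of all these elements, but `p` is maximal
and `a ∉ p`, so `1 - a * r ∈ p` for an inverse `r` of `a` modulo `p`. Then `a - a * a * x` is
nilpotent, hence lies in every prime `P`; when `PR_P = 0` it is killed by some `s ∉ P`, so it
lies in `A`.
-/

namespace Ring.KrullDimLE

variable {R : Type*} [CommRing R] [Ring.KrullDimLE 0 R]

theorem exists_pow_mul_one_sub_mul_eq_zero (a : R) :
    ∃ (n : ℕ) (x : R), a ^ n * (1 - a * x) = 0 := by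
  by_contra! h
  let S : Submonoid R :=
    { carrier := {y | ∃ (n : ℕ) (x : R), y = a ^ n * (1 - a * x)}
      one_mem' := ⟨0, 0, by ring⟩
      mul_mem' := by
        rintro _ _ ⟨n, x, rfl⟩ ⟨m, y, rfl⟩
        exact ⟨n + m, x + y - a * x * y, by ring⟩ }
  have hS : Disjoint ((⊥ : Ideal R) : Set R) S :=
    Set.disjoint_left.mpr fun y hy ⟨n, x, hyS⟩ ↦ h n x (hyS ▸ hy)
  obtain ⟨p, hp, -, hpS⟩ := Ideal.exists_le_prime_disjoint ⊥ S hS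
  have ha : a ∉ p := fun ha ↦ Set.disjoint_left.mp hpS ha ⟨1, 0, by ring⟩
  obtain ⟨r, i, hi, hri⟩ := hp.isMaximal'.exists_inv ha
  exact Set.disjoint_left.mp hpS hi ⟨0, r, by linear_combination hri⟩

theorem exists_isNilpotent_sub_mul_self_mul (a : R) : ∃ x, IsNilpotent (a - a * a * x) := by
  obtain ⟨n, x, hx⟩ := exists_pow_mul_one_sub_mul_eq_zero a
  refine ⟨x, n + 1, ?_⟩
  calc (a - a * a * x) ^ (n + 1) = (a * (1 - a * x)) ^ (n + 1) := by ring
    _ = a ^ n * (1 - a * x) * (a * (1 - a * x) ^ n) := by rw [mul_pow, pow_succ, pow_succ]; ring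
    _ = 0 := by rw [hx, zero_mul]

end Ring.KrullDimLE

/-- For `R` of Krull dimension 0, with `X = {P maximal | PR_P = 0}` and `A`
the kernel of `R → ∏_{P ∈ X} R_P`, the quotient `R/A` is von Neumann regular. -/
theorem quotient_kernel_vonNeumann_regular (R : Type u) [CommRing R]
    (hdim : ∀ Q : Ideal R, Q.IsPrime → Q.IsMaximal)
    (X : Set (Ideal R))
    (hX : X = {P : Ideal R | P.IsMaximal ∧ ∀ a ∈ P, ∃ s ∉ P, s * a = 0})
    (A : Ideal R)
    (hA : ∀ r : R, r ∈ A ↔ ∀ P ∈ X, ∃ s ∉ P, s * r = 0) :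
    ∀ a : R ⧸ A, ∃ x : R ⧸ A, a = a * a * x := by
  have : Ring.KrullDimLE 0 R := .mk₀ hdim
  intro b
  obtain ⟨a, rfl⟩ := Ideal.Quotient.mk_surjective b
  obtain ⟨x, hx⟩ := Ring.KrullDimLE.exists_isNilpotent_sub_mul_self_mul a
  refine ⟨Ideal.Quotient.mk A x, ?_⟩
  rw [← map_mul, ← map_mul, Ideal.Quotient.eq, hA]
  rintro P hP
  rw [hX] at hP
  have := hP.1.isPrime
  exact hP.2 _ (nilradical_le_prime P hx)
end

section
/- Let R be a commutative local ring with exactly one prime ideal P, and suppose R satisfies the descending chain condition on principal ideals. Then P² ≠ P unless P = 0. -/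
universe u v

/-! If `P² = P ≠ 0`, the DCC on principal ideals yields an `x` with `xP ≠ 0` but `qxP = 0` for
every `q ∈ P`: a minimal principal ideal `Rx` with `xP ≠ 0`, since `Rqx = Rx` would force
`x = 0` in a local ring. Then `xP = xP² = 0`, a contradiction. -/

def HasDCCPrincipalIdeals (R : Type u) [CommRing R] : Prop :=
  ∀ f : ℕ → R, (∀ n, Ideal.span {f (n + 1)} ≤ Ideal.span {f n}) →
    ∃ N, ∀ n, N ≤ n → Ideal.span {f n} = Ideal.span {f N}

open Ideal IsLocalRing

section

variable {R : Type u} [CommRing R]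

theorem HasDCCPrincipalIdeals.wellFounded (h : HasDCCPrincipalIdeals R) :
    WellFounded fun a b : R => span {a} < span {b} := by
  refine wellFounded_iff_isEmpty_descending_chain.mpr ⟨fun ⟨f, hf⟩ => ?_⟩
  obtain ⟨N, hN⟩ := h f fun n => (hf n).le
  exact (hf N).ne (hN (N + 1) N.le_succ)

theorem IsLocalRing.eq_zero_of_mem_span_singleton_mul [IsLocalRing R] {q x : R}
    (hq : q ∈ maximalIdeal R) (hx : x ∈ span {q * x}) : x = 0 := by
  obtain ⟨a, hax⟩ := mem_span_singleton'.mp hx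
  have hunit : IsUnit (1 - a * q) :=
    isUnit_one_sub_self_of_mem_nonunits _ (mul_mem_left _ a hq)
  exact hunit.mul_right_eq_zero.mp (by linear_combination -hax)

theorem HasDCCPrincipalIdeals.exists_forall_mul_notMem [IsLocalRing R]
    (h : HasDCCPrincipalIdeals R) {S : Set R} (hS : S.Nonempty) (h0 : 0 ∉ S) :
    ∃ x ∈ S, ∀ q ∈ maximalIdeal R, q * x ∉ S := by
  obtain ⟨x, hxS, hmin⟩ := h.wellFounded.has_min S hS
  refine ⟨x, hxS, fun q hq hqx => h0 ?_⟩
  have hle : span {q * x} ≤ span {x} :=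
    span_singleton_le_span_singleton.mpr (dvd_mul_left x q)
  have heq : span {q * x} = span {x} := hle.eq_of_not_lt (hmin _ hqx)
  exact eq_zero_of_mem_span_singleton_mul hq (heq ▸ mem_span_singleton_self x) ▸ hxS

theorem span_singleton_mul_mul_eq_bot {x : R} {I : Ideal R}
    (h : ∀ q ∈ I, span {q * x} * I = ⊥) : span {x} * I * I = ⊥ := by
  refine le_bot_iff.mp (mul_le.mpr fun a ha b hb => ?_)
  obtain ⟨q, hq, rfl⟩ := mem_span_singleton_mul.mp ha
  rw [mul_comm x, ← h q hq]
  exact mul_mem_mul (mem_span_singleton_self _) hb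

end

theorem maximalIdeal_sq_ne_self_general (R : Type u) [CommRing R] [IsLocalRing R]
    (hdcc : ∀ f : ℕ → R, (∀ n, Ideal.span {f (n + 1)} ≤ Ideal.span {f n}) →
      ∃ N, ∀ n, N ≤ n → Ideal.span {f n} = Ideal.span {f N})
    (hsq : IsLocalRing.maximalIdeal R ^ 2 = IsLocalRing.maximalIdeal R) :
    IsLocalRing.maximalIdeal R = ⊥ := by
  set P := maximalIdeal R
  by_contra hP
  obtain ⟨x, hx, hqx⟩ := HasDCCPrincipalIdeals.exists_forall_mul_notMem hdcc
    (S := {x | span {x} * P ≠ ⊥}) ⟨1, by simpa using hP⟩ (by simp)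
  apply hx
  calc span {x} * P = span {x} * P * P := by rw [mul_assoc, ← sq, hsq]
    _ = ⊥ := span_singleton_mul_mul_eq_bot fun q hq => not_not.mp (hqx q hq)

/-- If `R` is a commutative local ring whose unique prime ideal is its
maximal ideal `P`, and `R` has the DCC on principal ideals, then `P² = P` forces `P = 0`. -/
theorem maximalIdeal_sq_ne_self (R : Type u) [CommRing R] [IsLocalRing R]
    (hprime : ∀ Q : Ideal R, Q.IsPrime → Q = IsLocalRing.maximalIdeal R)
    (hdcc : ∀ f : ℕ → R, (∀ n, Ideal.span {f (n + 1)} ≤ Ideal.span {f n}) →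
      ∃ N, ∀ n, N ≤ n → Ideal.span {f n} = Ideal.span {f N})
    (hsq : IsLocalRing.maximalIdeal R ^ 2 = IsLocalRing.maximalIdeal R) :
    IsLocalRing.maximalIdeal R = ⊥ :=
  maximalIdeal_sq_ne_self_general R hdcc hsq
end
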